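/- arXiv:2212.05568 — 7 statements merged into one kernel-verified Lean document; each statement's English description precedes it below -/
import Mathlib

section
/- Let λ ≤ λ_O be reals and E_O > 0. Let z, 𝕳 : ℝ → ℝ with z differentiable and 𝕳 continuous on [λ, λ_O], satisfying z'(λ') = −E_O(1+z(λ'))²𝕳(λ') for all λ' ∈ [λ, λ_O], z(λ_O) = 0, and 1 + z(λ') > 0 on [λ, λ_O]. Then (1/2)·(1 − (1+z(λ))^{−2}) = E_O ∫_λ^{λ_O} 𝕳(λ')/(1+z(λ')) dλ' (eq. (13) of the paper). -/
open intervalIntegral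

/- Along a solution of `u' = -c u² h`, the function `u⁻² / 2` is an antiderivative of `c h / u`,
so the identity is the fundamental theorem of calculus applied to `u = 1 + z`, with `u(λ_O) = 1`. -/

theorem HasDerivAt.inv_sq_div_two {u : ℝ → ℝ} {c h x : ℝ}
    (hu : HasDerivAt u (-c * u x ^ 2 * h) x) (hux : u x ≠ 0) :
    HasDerivAt (fun t => (u t ^ 2)⁻¹ / 2) (c * (h / u x)) x := by
  refine (((hu.pow 2).inv (pow_ne_zero 2 hux)).div_const 2).congr_deriv ?_
  simp only [Pi.pow_apply]
  field_simp
  ring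

theorem integral_div_eq_of_hasDerivAt_eq_neg_mul_sq {u h : ℝ → ℝ} {a b c : ℝ}
    (hu : ∀ x ∈ Set.uIcc a b, HasDerivAt u (-c * u x ^ 2 * h x) x)
    (hh : ContinuousOn h (Set.uIcc a b)) (hu0 : ∀ x ∈ Set.uIcc a b, u x ≠ 0) :
    c * ∫ x in a..b, h x / u x = (u b ^ 2)⁻¹ / 2 - (u a ^ 2)⁻¹ / 2 := by
  have hu_cont : ContinuousOn u (Set.uIcc a b) := fun x hx =>
    (hu x hx).continuousAt.continuousWithinAt
  rw [← integral_const_mul]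
  exact integral_eq_sub_of_hasDerivAt (fun x hx => (hu x hx).inv_sq_div_two (hu0 x hx))
    (continuousOn_const.mul (hh.div hu_cont hu0)).intervalIntegrable

theorem milne_redshift_integral_identity_general
    (lam lamO : ℝ) (hle : lam ≤ lamO)
    (EO : ℝ)
    (z H : ℝ → ℝ)
    (hz : ∀ lam' ∈ Set.Icc lam lamO,
      HasDerivAt z (-EO * (1 + z lam') ^ 2 * H lam') lam')
    (hH : ContinuousOn H (Set.Icc lam lamO))
    (hzO : z lamO = 0)
    (hzpos : ∀ lam' ∈ Set.Icc lam lamO, 0 < 1 + z lam') :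
    (1 - ((1 + z lam) ^ 2)⁻¹) / 2
      = EO * ∫ lam' in lam..lamO, H lam' / (1 + z lam') := by
  rw [← Set.uIcc_of_le hle] at hz hH hzpos
  rw [integral_div_eq_of_hasDerivAt_eq_neg_mul_sq (u := fun t => 1 + z t)
    (fun x hx => (hz x hx).const_add 1) hH (fun x hx => (hzpos x hx).ne'), hzO]
  ring

/-- Eq. (13) of the paper: integrating the redshift evolution equation
`z' = −E_O(1+z)²𝕳` with `z(λ_O) = 0` yields
`(1 − (1+z(λ))⁻²)/2 = E_O ∫_λ^{λ_O} 𝕳/(1+z) dλ'`. -/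
theorem milne_redshift_integral_identity
    (lam lamO : ℝ) (hle : lam ≤ lamO)
    (EO : ℝ) (hEO : 0 < EO)
    (z H : ℝ → ℝ)
    (hz : ∀ lam' ∈ Set.Icc lam lamO,
      HasDerivAt z (-EO * (1 + z lam') ^ 2 * H lam') lam')
    (hH : ContinuousOn H (Set.Icc lam lamO))
    (hzO : z lamO = 0)
    (hzpos : ∀ lam' ∈ Set.Icc lam lamO, 0 < 1 + z lam') :
    (1 - ((1 + z lam) ^ 2)⁻¹) / 2
      = EO * ∫ lam' in lam..lamO, H lam' / (1 + z lam') :=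
  milne_redshift_integral_identity_general lam lamO hle EO z H hz hH hzO hzpos
end

section
/- Let λ ≤ λ_O be reals and E_O > 0. Let z, 𝕳, 𝕼 : ℝ → ℝ with z and 𝕳 differentiable on [λ, λ_O], 𝕼𝕳² continuous on [λ, λ_O], satisfying z' = −E_O(1+z)²𝕳, z(λ_O) = 0, 1+z > 0 on [λ, λ_O], and 𝕳' = −E_O(1+z)𝕳²(1+𝕼). Then 𝕳(λ)/(1+z(λ)) − 𝕳(λ_O) = E_O ∫_λ^{λ_O} 𝕳(λ')² 𝕼(λ') dλ' (the integral identity used in the proof of Theorem 1 of the paper). -/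
open intervalIntegral

/-! In the derivative of `𝕳/(1+z)` the term `−E_O(1+z)𝕳²` coming from `𝕳'` cancels the one coming
from `z'`, leaving `−E_O 𝕳²𝕼`; the identity is the fundamental theorem of calculus for it. -/

theorem hasDerivAt_div_one_add_of_redshift_eqs {E : ℝ} {z H Q : ℝ → ℝ} {x : ℝ}
    (hz : HasDerivAt z (-E * (1 + z x) ^ 2 * H x) x)
    (hH : HasDerivAt H (-E * (1 + z x) * H x ^ 2 * (1 + Q x)) x)
    (hzx : 1 + z x ≠ 0) :
    HasDerivAt (fun t => H t / (1 + z t)) (-E * (H x ^ 2 * Q x)) x := by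
  refine (hH.div (hz.const_add 1) hzx).congr_deriv ?_
  field_simp
  ring

theorem effective_hubble_integral_identity_general
    (lam lamO : ℝ) (hle : lam ≤ lamO)
    (EO : ℝ)
    (z H Q : ℝ → ℝ)
    (hz : ∀ lam' ∈ Set.Icc lam lamO,
      HasDerivAt z (-EO * (1 + z lam') ^ 2 * H lam') lam')
    (hH : ∀ lam' ∈ Set.Icc lam lamO,
      HasDerivAt H (-EO * (1 + z lam') * (H lam') ^ 2 * (1 + Q lam')) lam')
    (hQH : ContinuousOn (fun lam' => Q lam' * (H lam') ^ 2) (Set.Icc lam lamO))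
    (hzO : z lamO = 0)
    (hzpos : ∀ lam' ∈ Set.Icc lam lamO, 0 < 1 + z lam') :
    H lam / (1 + z lam) - H lamO
      = EO * ∫ lam' in lam..lamO, (H lam') ^ 2 * Q lam' := by
  rw [← Set.uIcc_of_le hle] at hz hH hQH hzpos
  have hderiv : ∀ x ∈ Set.uIcc lam lamO,
      HasDerivAt (fun t => H t / (1 + z t)) (-EO * (H x ^ 2 * Q x)) x := fun x hx =>
    hasDerivAt_div_one_add_of_redshift_eqs (hz x hx) (hH x hx) (hzpos x hx).ne'
  have hint : IntervalIntegrable (fun x => -EO * (H x ^ 2 * Q x)) MeasureTheory.volume lam lamO :=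
    (continuousOn_const.mul (hQH.congr fun x _ => mul_comm _ _)).intervalIntegrable
  have hftc := integral_eq_sub_of_hasDerivAt hderiv hint
  rw [integral_const_mul, hzO, add_zero, div_one] at hftc
  linarith

/-- The integral identity used in the proof of Theorem 1 of the paper:
`𝕳(λ)/(1+z(λ)) − 𝕳(λ_O) = E_O ∫_λ^{λ_O} 𝕳² 𝕼 dλ'`, which follows from the
redshift evolution equation and the definition of the effective deceleration
parameter `𝕼` via `𝕳' = −E_O(1+z)𝕳²(1+𝕼)`. -/
theorem effective_hubble_integral_identity
    (lam lamO : ℝ) (hle : lam ≤ lamO)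
    (EO : ℝ) (hEO : 0 < EO)
    (z H Q : ℝ → ℝ)
    (hz : ∀ lam' ∈ Set.Icc lam lamO,
      HasDerivAt z (-EO * (1 + z lam') ^ 2 * H lam') lam')
    (hH : ∀ lam' ∈ Set.Icc lam lamO,
      HasDerivAt H (-EO * (1 + z lam') * (H lam') ^ 2 * (1 + Q lam')) lam')
    (hQH : ContinuousOn (fun lam' => Q lam' * (H lam') ^ 2) (Set.Icc lam lamO))
    (hzO : z lamO = 0)
    (hzpos : ∀ lam' ∈ Set.Icc lam lamO, 0 < 1 + z lam') :
    H lam / (1 + z lam) - H lamO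
      = EO * ∫ lam' in lam..lamO, (H lam') ^ 2 * Q lam' :=
  effective_hubble_integral_identity_general lam lamO hle EO z H Q hz hH hQH hzO hzpos
end

section
/- Let λ ≤ λ_O be reals and E_O > 0. Let z, 𝕳, 𝕼 : ℝ → ℝ with z and 𝕳 differentiable on [λ, λ_O], 𝕼𝕳² continuous on [λ, λ_O], satisfying z' = −E_O(1+z)²𝕳, z(λ_O) = 0, 1+z > 0 on [λ, λ_O], and 𝕳' = −E_O(1+z)𝕳²(1+𝕼). Set 𝕳_O = 𝕳(λ_O). Then the exact distance–redshift relation holds: (1/2)·(1 − (1+z(λ))^{−2}) = 𝕳_O E_O (λ_O − λ) + E_O² ∫_λ^{λ_O} ∫_{λ'}^{λ_O} 𝕼(λ'')𝕳(λ'')² dλ'' dλ' (eq. (14) of the paper). -/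
/-!
With `F = (1 - (1+z)⁻²)/2` and `G = E_O 𝕳/(1+z)`, the two evolution equations give
`F' = -G` and `G' = -E_O² 𝕼𝕳²`, while `F(λ_O) = 0` and `G(λ_O) = E_O 𝕳_O`.
The relation is therefore Taylor's formula for `F` at `λ_O` to first order, with the remainder
written as the iterated integral of `F''`.
-/

open intervalIntegral Set

theorem eq_sub_deriv_mul_add_integral_integral {f f' f'' : ℝ → ℝ} {a b : ℝ}
    (hf : ∀ t ∈ uIcc a b, HasDerivAt f (f' t) t)
    (hf' : ∀ t ∈ uIcc a b, HasDerivAt f' (f'' t) t)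
    (hf'' : ContinuousOn f'' (uIcc a b)) :
    f a = f b - f' b * (b - a) + ∫ s in a..b, ∫ t in s..b, f'' t := by
  have hf'_cont : ContinuousOn f' (uIcc a b) :=
    fun t ht => (hf' t ht).continuousAt.continuousWithinAt
  have inner : ∀ s ∈ uIcc a b, ∫ t in s..b, f'' t = f' b - f' s := fun s hs =>
    integral_eq_sub_of_hasDerivAt (fun t ht => hf' t (uIcc_subset_uIcc_right hs ht))
      ((hf''.mono (uIcc_subset_uIcc_right hs)).intervalIntegrable)
  have outer : ∫ s in a..b, ∫ t in s..b, f'' t = f' b * (b - a) - (f b - f a) := by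
    rw [integral_congr inner, integral_sub intervalIntegrable_const hf'_cont.intervalIntegrable,
      integral_const, integral_eq_sub_of_hasDerivAt hf hf'_cont.intervalIntegrable, smul_eq_mul,
      mul_comm]
  linarith

section Redshift

variable {E : ℝ} {z H Q : ℝ → ℝ} {t : ℝ}

theorem hasDerivAt_one_sub_inv_sq_div_two
    (hz : HasDerivAt z (-E * (1 + z t) ^ 2 * H t) t) (hzt : 1 + z t ≠ 0) :
    HasDerivAt (fun s => (1 - ((1 + z s) ^ 2)⁻¹) / 2) (-(E * H t / (1 + z t))) t := by
  have hsq : HasDerivAt (fun s => (1 + z s) ^ 2) (2 * (1 + z t) * (-E * (1 + z t) ^ 2 * H t)) t :=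
    ((hz.const_add 1).pow 2).congr_deriv (by ring)
  refine (((hsq.inv (pow_ne_zero 2 hzt)).const_sub 1).div_const 2).congr_deriv ?_
  field_simp

theorem hasDerivAt_mul_div_one_add
    (hz : HasDerivAt z (-E * (1 + z t) ^ 2 * H t) t)
    (hH : HasDerivAt H (-E * (1 + z t) * H t ^ 2 * (1 + Q t)) t) (hzt : 1 + z t ≠ 0) :
    HasDerivAt (fun s => E * H s / (1 + z s)) (-(E ^ 2 * (Q t * H t ^ 2))) t := by
  refine ((hH.const_mul E).div (hz.const_add 1) hzt).congr_deriv ?_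
  field_simp
  ring

end Redshift

theorem exact_distance_redshift_relation_general
    (lam lamO : ℝ) (hle : lam ≤ lamO)
    (EO : ℝ)
    (z H Q : ℝ → ℝ)
    (hz : ∀ lam' ∈ Set.Icc lam lamO,
      HasDerivAt z (-EO * (1 + z lam') ^ 2 * H lam') lam')
    (hH : ∀ lam' ∈ Set.Icc lam lamO,
      HasDerivAt H (-EO * (1 + z lam') * (H lam') ^ 2 * (1 + Q lam')) lam')
    (hQH : ContinuousOn (fun lam' => Q lam' * (H lam') ^ 2) (Set.Icc lam lamO))
    (hzO : z lamO = 0)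
    (hzpos : ∀ lam' ∈ Set.Icc lam lamO, 0 < 1 + z lam') :
    (1 - ((1 + z lam) ^ 2)⁻¹) / 2
      = H lamO * EO * (lamO - lam)
        + EO ^ 2 * ∫ lam' in lam..lamO, ∫ lam'' in lam'..lamO,
            Q lam'' * (H lam'') ^ 2 := by
  rw [← uIcc_of_le hle] at hz hH hQH hzpos
  have taylor := eq_sub_deriv_mul_add_integral_integral
    (f := fun s => (1 - ((1 + z s) ^ 2)⁻¹) / 2) (f' := fun s => -(EO * H s / (1 + z s)))
    (f'' := fun s => EO ^ 2 * (Q s * H s ^ 2))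
    (fun t ht => hasDerivAt_one_sub_inv_sq_div_two (hz t ht) (hzpos t ht).ne')
    (fun t ht => by
      simpa using (hasDerivAt_mul_div_one_add (hz t ht) (hH t ht) (hzpos t ht).ne').fun_neg)
    (continuousOn_const.mul hQH)
  simp only [integral_const_mul, hzO] at taylor
  rw [taylor]
  simp only [add_zero, one_pow, inv_one, sub_self, zero_div, div_one]
  ring

/-- Eq. (14) of the paper: the exact distance–redshift relation
`(1 − (1+z(λ))⁻²)/2 = 𝕳_O E_O (λ_O − λ) + E_O² ∫_λ^{λ_O}∫_{λ'}^{λ_O} 𝕼𝕳² dλ'' dλ'`. -/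
theorem exact_distance_redshift_relation
    (lam lamO : ℝ) (hle : lam ≤ lamO)
    (EO : ℝ) (hEO : 0 < EO)
    (z H Q : ℝ → ℝ)
    (hz : ∀ lam' ∈ Set.Icc lam lamO,
      HasDerivAt z (-EO * (1 + z lam') ^ 2 * H lam') lam')
    (hH : ∀ lam' ∈ Set.Icc lam lamO,
      HasDerivAt H (-EO * (1 + z lam') * (H lam') ^ 2 * (1 + Q lam')) lam')
    (hQH : ContinuousOn (fun lam' => Q lam' * (H lam') ^ 2) (Set.Icc lam lamO))
    (hzO : z lamO = 0)
    (hzpos : ∀ lam' ∈ Set.Icc lam lamO, 0 < 1 + z lam') :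
    (1 - ((1 + z lam) ^ 2)⁻¹) / 2
      = H lamO * EO * (lamO - lam)
        + EO ^ 2 * ∫ lam' in lam..lamO, ∫ lam'' in lam'..lamO,
            Q lam'' * (H lam'') ^ 2 :=
  exact_distance_redshift_relation_general lam lamO hle EO z H Q hz hH hQH hzO hzpos
end

section
/- (Theorem 1, sub-Milne dimming.) Let λ_e ≤ λ_O be reals and E_O > 0. Let z, 𝕳, 𝕼, d_A, F : ℝ → ℝ satisfy on [λ_e, λ_O]: z differentiable with z' = −E_O(1+z)²𝕳, z(λ_O) = 0, 1+z > 0; 𝕳 differentiable with 𝕳' = −E_O(1+z)𝕳²(1+𝕼) and 𝕳_O := 𝕳(λ_O) > 0; 𝕼𝕳² continuous; d_A twice differentiable with d_A'' = −F·d_A, F ≥ 0, d_A ≥ 0, d_A(λ_O) = 0, d_A'(λ_O) = −E_O. If λ ∈ [λ_e, λ_O] is such that ∫_λ^{λ_O} ∫_{λ'}^{λ_O} 𝕼(λ'')𝕳(λ'')² dλ'' dλ' ≥ 0, then 𝕳_O · d_A(λ) ≤ (1/2)·(1 − (1+z(λ))^{−2}); that is, the angular diameter distance at redshift z(λ) is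 bounded above by that of the Milne universe model. -/
/-!
By the focusing equation and the null energy condition `d_A'' = -F d_A ≤ 0`, so `d_A` lies below
its tangent at the vertex: `d_A(λ) ≤ E_O (λ_O - λ)`. On the other side, `𝕳/(1+z)` has derivative
`-E_O 𝕼𝕳²` and the Milne distance of `z` has derivative `-E_O 𝕳/(1+z)`; integrating twice from
`λ_O` gives `Milne(z(λ)) = E_O (λ_O - λ) 𝕳_O + E_O² ∫∫ 𝕼𝕳²`, which dominates `𝕳_O d_A(λ)` as
soon as the double integral is nonnegative.
-/

open intervalIntegral Set

lemma concaveOn_of_hasDerivAt2_nonpos {D : Set ℝ} (hD : Convex ℝ D) {f f' f'' : ℝ → ℝ}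
    (hf : ∀ x ∈ D, HasDerivAt f (f' x) x) (hf' : ∀ x ∈ D, HasDerivAt f' (f'' x) x)
    (hf''₀ : ∀ x ∈ D, f'' x ≤ 0) : ConcaveOn ℝ D f :=
  concaveOn_of_hasDerivWithinAt2_nonpos hD
    (fun x hx => (hf x hx).continuousAt.continuousWithinAt)
    (fun x hx => (hf x (interior_subset hx)).hasDerivWithinAt)
    (fun x hx => (hf' x (interior_subset hx)).hasDerivWithinAt)
    (fun x hx => hf''₀ x (interior_subset hx))

lemma ConcaveOn.le_add_mul_sub_of_hasDerivAt {S : Set ℝ} {f : ℝ → ℝ} {f' x y : ℝ}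
    (hfc : ConcaveOn ℝ S f) (hx : x ∈ S) (hy : y ∈ S) (hxy : x ≤ y) (hf' : HasDerivAt f f' y) :
    f x ≤ f y + f' * (x - y) := by
  rcases hxy.eq_or_lt with rfl | hlt
  · simp
  have hslope := hfc.le_slope_of_hasDerivAt hx hy hlt hf'
  rw [slope_def_field, le_div_iff₀ (sub_pos.mpr hlt)] at hslope
  linarith

noncomputable def milneDistance (z : ℝ) : ℝ := (1 - ((1 + z) ^ 2)⁻¹) / 2

lemma hasDerivAt_milneDistance {z : ℝ} (hz : 1 + z ≠ 0) :
    HasDerivAt milneDistance ((1 + z) ^ 3)⁻¹ z := by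
  refine ((((hasDerivAt_id' z).const_add 1).fun_pow 2).inv (pow_ne_zero 2 hz)).const_sub 1
    |>.div_const 2 |>.congr_deriv ?_
  field_simp
  ring

section Redshift

variable {E : ℝ} {z H Q : ℝ → ℝ} {s : Set ℝ} {a b : ℝ}

lemma hasDerivAt_hubble_div_one_add_redshift {t : ℝ}
    (hz : HasDerivAt z (-E * (1 + z t) ^ 2 * H t) t)
    (hH : HasDerivAt H (-E * (1 + z t) * H t ^ 2 * (1 + Q t)) t) (hzt : 1 + z t ≠ 0) :
    HasDerivAt (fun u => H u / (1 + z u)) (-(E * (Q t * H t ^ 2))) t := by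
  refine (hH.div (hz.const_add 1) hzt).congr_deriv ?_
  field_simp
  ring

lemma hasDerivAt_milneDistance_comp_redshift {t : ℝ}
    (hz : HasDerivAt z (-E * (1 + z t) ^ 2 * H t) t) (hzt : 1 + z t ≠ 0) :
    HasDerivAt (fun u => milneDistance (z u)) (-(E * (H t / (1 + z t)))) t := by
  refine ((hasDerivAt_milneDistance hzt).comp t hz).congr_deriv ?_
  field_simp

variable [s.OrdConnected]

lemma hubble_div_one_add_redshift_eq (hz : ∀ t ∈ s, HasDerivAt z (-E * (1 + z t) ^ 2 * H t) t)
    (hH : ∀ t ∈ s, HasDerivAt H (-E * (1 + z t) * H t ^ 2 * (1 + Q t)) t)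
    (hzne : ∀ t ∈ s, 1 + z t ≠ 0) (hQH : ContinuousOn (fun t => Q t * H t ^ 2) s)
    (ha : a ∈ s) (hb : b ∈ s) (hzb : z b = 0) :
    H a / (1 + z a) = H b + E * ∫ t in a..b, Q t * H t ^ 2 := by
  have hab : uIcc a b ⊆ s := ‹s.OrdConnected›.uIcc_subset ha hb
  have hftc := integral_eq_sub_of_hasDerivAt
    (fun t ht => hasDerivAt_hubble_div_one_add_redshift (hz t (hab ht)) (hH t (hab ht))
      (hzne t (hab ht)))
    (((hQH.mono hab).intervalIntegrable).const_mul E).neg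
  rw [integral_neg, integral_const_mul, hzb, add_zero, div_one] at hftc
  linarith

lemma milneDistance_redshift_eq (hz : ∀ t ∈ s, HasDerivAt z (-E * (1 + z t) ^ 2 * H t) t)
    (hH : ∀ t ∈ s, HasDerivAt H (-E * (1 + z t) * H t ^ 2 * (1 + Q t)) t)
    (hzne : ∀ t ∈ s, 1 + z t ≠ 0) (hQH : ContinuousOn (fun t => Q t * H t ^ 2) s)
    (ha : a ∈ s) (hb : b ∈ s) (hzb : z b = 0) :
    milneDistance (z a) =
      E * ((b - a) * H b + E * ∫ t in a..b, ∫ u in t..b, Q u * H u ^ 2) := by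
  have hab : uIcc a b ⊆ s := ‹s.OrdConnected›.uIcc_subset ha hb
  have hratio_cont : ContinuousOn (fun t => H t / (1 + z t)) s :=
    ContinuousOn.div (fun t ht => (hH t ht).continuousAt.continuousWithinAt)
      (fun t ht => ((hz t ht).const_add 1).continuousAt.continuousWithinAt) hzne
  have hftc := integral_eq_sub_of_hasDerivAt
    (fun t ht => hasDerivAt_milneDistance_comp_redshift (hz t (hab ht)) (hzne t (hab ht)))
    (((hratio_cont.mono hab).intervalIntegrable).const_mul E).neg
  have hprimitive :
      IntervalIntegrable (fun t => ∫ u in t..b, Q u * H u ^ 2) MeasureTheory.volume a b :=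
    (continuousOn_primitive_interval_left ((hQH.mono hab).integrableOn_compact isCompact_uIcc))
      |>.intervalIntegrable
  have hratio : ∫ t in a..b, H t / (1 + z t)
      = (b - a) * H b + E * ∫ t in a..b, ∫ u in t..b, Q u * H u ^ 2 := by
    rw [integral_congr fun t ht => hubble_div_one_add_redshift_eq hz hH hzne hQH (hab ht) hb hzb,
      integral_add intervalIntegrable_const (hprimitive.const_mul E), integral_const,
      integral_const_mul, smul_eq_mul]
  rw [integral_neg, integral_const_mul, hratio, hzb] at hftc
  simp only [milneDistance, add_zero, one_pow, inv_one, sub_self, zero_div] at hftc ⊢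
  linarith

end Redshift

theorem sub_Milne_dimming_general
    (lamE lamO : ℝ)
    (EO : ℝ)
    (z H Q dA dA' F : ℝ → ℝ)
    (hz : ∀ lam ∈ Set.Icc lamE lamO,
      HasDerivAt z (-EO * (1 + z lam) ^ 2 * H lam) lam)
    (hzO : z lamO = 0)
    (hzpos : ∀ lam ∈ Set.Icc lamE lamO, 0 < 1 + z lam)
    (hH : ∀ lam ∈ Set.Icc lamE lamO,
      HasDerivAt H (-EO * (1 + z lam) * (H lam) ^ 2 * (1 + Q lam)) lam)
    (hHO : 0 < H lamO)
    (hQH : ContinuousOn (fun lam => Q lam * (H lam) ^ 2) (Set.Icc lamE lamO))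
    (hdA : ∀ lam ∈ Set.Icc lamE lamO, HasDerivAt dA (dA' lam) lam)
    (hfocus : ∀ lam ∈ Set.Icc lamE lamO, HasDerivAt dA' (-(F lam) * dA lam) lam)
    (hF : ∀ lam ∈ Set.Icc lamE lamO, 0 ≤ F lam)
    (hdApos : ∀ lam ∈ Set.Icc lamE lamO, 0 ≤ dA lam)
    (hvertex : dA lamO = 0)
    (hslope : dA' lamO = -EO)
    (lam : ℝ) (hlam : lam ∈ Set.Icc lamE lamO)
    (hQQ : 0 ≤ ∫ lam' in lam..lamO, ∫ lam'' in lam'..lamO,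
      Q lam'' * (H lam'') ^ 2) :
    H lamO * dA lam ≤ (1 - ((1 + z lam) ^ 2)⁻¹) / 2 := by
  have hO : lamO ∈ Icc lamE lamO := ⟨hlam.1.trans hlam.2, le_rfl⟩
  have hconcave : ConcaveOn ℝ (Icc lamE lamO) dA :=
    concaveOn_of_hasDerivAt2_nonpos (convex_Icc _ _) hdA hfocus fun t ht => by
      rw [neg_mul, neg_nonpos]
      exact mul_nonneg (hF t ht) (hdApos t ht)
  have hdA_le : dA lam ≤ EO * (lamO - lam) := by
    have h := hconcave.le_add_mul_sub_of_hasDerivAt hlam hO hlam.2 (hdA lamO hO)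
    rw [hvertex, hslope] at h
    linarith
  have hmilne := milneDistance_redshift_eq hz hH (fun t ht => (hzpos t ht).ne') hQH hlam hO hzO
  calc H lamO * dA lam ≤ H lamO * (EO * (lamO - lam)) :=
        mul_le_mul_of_nonneg_left hdA_le hHO.le
    _ ≤ milneDistance (z lam) := by
      rw [hmilne]
      linear_combination mul_nonneg (sq_nonneg EO) hQQ

/-- Theorem 1 of the paper (sub-Milne dimming): in a general-relativistic
spacetime obeying the null energy condition, with `𝕳_O > 0`, if the double
integral of `𝕼𝕳²` is nonnegative at `λ`, then the angular diameter distance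
at redshift `z(λ)` is bounded above by that of the Milne universe model:
`𝕳_O d_A ≤ (1 − (1+z)⁻²)/2`. -/
theorem sub_Milne_dimming
    (lamE lamO : ℝ) (hle : lamE ≤ lamO)
    (EO : ℝ) (hEO : 0 < EO)
    (z H Q dA dA' F : ℝ → ℝ)
    (hz : ∀ lam ∈ Set.Icc lamE lamO,
      HasDerivAt z (-EO * (1 + z lam) ^ 2 * H lam) lam)
    (hzO : z lamO = 0)
    (hzpos : ∀ lam ∈ Set.Icc lamE lamO, 0 < 1 + z lam)
    (hH : ∀ lam ∈ Set.Icc lamE lamO,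
      HasDerivAt H (-EO * (1 + z lam) * (H lam) ^ 2 * (1 + Q lam)) lam)
    (hHO : 0 < H lamO)
    (hQH : ContinuousOn (fun lam => Q lam * (H lam) ^ 2) (Set.Icc lamE lamO))
    (hdA : ∀ lam ∈ Set.Icc lamE lamO, HasDerivAt dA (dA' lam) lam)
    (hfocus : ∀ lam ∈ Set.Icc lamE lamO, HasDerivAt dA' (-(F lam) * dA lam) lam)
    (hF : ∀ lam ∈ Set.Icc lamE lamO, 0 ≤ F lam)
    (hdApos : ∀ lam ∈ Set.Icc lamE lamO, 0 ≤ dA lam)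
    (hvertex : dA lamO = 0)
    (hslope : dA' lamO = -EO)
    (lam : ℝ) (hlam : lam ∈ Set.Icc lamE lamO)
    (hQQ : 0 ≤ ∫ lam' in lam..lamO, ∫ lam'' in lam'..lamO,
      Q lam'' * (H lam'') ^ 2) :
    H lamO * dA lam ≤ (1 - ((1 + z lam) ^ 2)⁻¹) / 2 :=
  sub_Milne_dimming_general lamE lamO EO z H Q dA dA' F hz hzO hzpos hH hHO hQH hdA hfocus hF hdApos
    hvertex hslope lam hlam hQQ
end

section
/- Let λ ≤ λ_O be reals and E_O > 0. Let d_A, F : ℝ → ℝ with d_A twice continuously differentiable on [λ, λ_O], F continuous and F ≥ 0 on [λ, λ_O], satisfying d_A'' = −F·d_A on [λ, λ_O], d_A(λ_O) = 0, d_A'(λ_O) = −E_O, and suppose d_A(λ') ≤ d_A(λ) for all λ' ∈ [λ, λ_O]. Then d_A(λ) ≥ E_O(λ_O − λ) − d_A(λ)·(λ_O − λ)·∫_λ^{λ_O} F(λ') dλ' (eqs. (19)–(21) of the paper: lower bound on the angular diameter distance in terms of the accumulated focusing). -/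
/-!
Integrating the focusing equation back from the vertex gives
`d_A'(x) = -E_O + ∫_x^{λ_O} F d_A`. Since `F ≥ 0` and `d_A` is largest at `λ`, the integral is at
most `d_A(λ) ∫_λ^{λ_O} F`, so `d_A' ≤ -E_O + d_A(λ) ∫_λ^{λ_O} F` on the whole interval, and the mean
value inequality on `[λ, λ_O]` turns this slope bound into the lower bound for `d_A(λ)`.
-/

open intervalIntegral Set

theorem eq_add_integral_of_hasDerivAt_neg_mul {g F u : ℝ → ℝ} {a b : ℝ} (hab : a ≤ b)
    (hg : ∀ x ∈ Icc a b, HasDerivAt g (-(F x) * u x) x)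
    (hF : ContinuousOn F (Icc a b)) (hu : ContinuousOn u (Icc a b)) :
    g a = g b + ∫ t in a..b, F t * u t := by
  have hint : IntervalIntegrable (fun t => -(F t) * u t) MeasureTheory.volume a b :=
    (hF.neg.mul hu).intervalIntegrable_of_Icc hab
  have hftc := integral_eq_sub_of_hasDerivAt_of_le hab
    (fun x hx => (hg x hx).continuousAt.continuousWithinAt)
    (fun x hx => hg x (Ioo_subset_Icc_self hx)) hint
  simp only [neg_mul, integral_neg] at hftc
  linarith

theorem integral_mul_le_mul_integral_of_le {F u : ℝ → ℝ} {a b M : ℝ} (hab : a ≤ b)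
    (hF : ContinuousOn F (Icc a b)) (hu : ContinuousOn u (Icc a b))
    (hF0 : ∀ x ∈ Icc a b, 0 ≤ F x) (huM : ∀ x ∈ Icc a b, u x ≤ M) :
    ∫ t in a..b, F t * u t ≤ M * ∫ t in a..b, F t := by
  rw [← integral_const_mul]
  refine integral_mono_on hab ((hF.mul hu).intervalIntegrable_of_Icc hab)
    ((continuousOn_const.mul hF).intervalIntegrable_of_Icc hab) fun x hx => ?_
  rw [mul_comm M]
  exact mul_le_mul_of_nonneg_left (huM x hx) (hF0 x hx)

theorem integral_le_integral_of_nonneg_of_le_left {F : ℝ → ℝ} {a x b : ℝ} (hax : a ≤ x)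
    (hxb : x ≤ b) (hF : ContinuousOn F (Icc a b)) (hF0 : ∀ t ∈ Icc a b, 0 ≤ F t) :
    ∫ t in x..b, F t ≤ ∫ t in a..b, F t :=
  integral_mono_interval hax hxb le_rfl
    (MeasureTheory.ae_restrict_of_forall_mem measurableSet_Ioc
      fun t ht => hF0 t (Ioc_subset_Icc_self ht))
    (hF.intervalIntegrable_of_Icc (hax.trans hxb))

theorem sub_le_mul_sub_of_hasDerivAt_le {f f' : ℝ → ℝ} {a b K : ℝ} (hab : a ≤ b)
    (hf : ∀ x ∈ Icc a b, HasDerivAt f (f' x) x) (hf'K : ∀ x ∈ Icc a b, f' x ≤ K) :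
    f b - f a ≤ K * (b - a) := by
  refine (convex_Icc a b).image_sub_le_mul_sub_of_deriv_le
    (fun x hx => (hf x hx).continuousAt.continuousWithinAt)
    (fun x hx => (hf x (interior_subset hx)).differentiableAt.differentiableWithinAt)
    (fun x hx => ?_) a (left_mem_Icc.2 hab) b (right_mem_Icc.2 hab) hab
  rw [(hf x (interior_subset hx)).deriv]
  exact hf'K x (interior_subset hx)

theorem dA_lower_bound_focusing_general
    (lam lamO : ℝ) (hle : lam ≤ lamO)
    (EO : ℝ)
    (dA dA' F : ℝ → ℝ)
    (hdA : ∀ lam' ∈ Set.Icc lam lamO, HasDerivAt dA (dA' lam') lam')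
    (hfocus : ∀ lam' ∈ Set.Icc lam lamO,
      HasDerivAt dA' (-(F lam') * dA lam') lam')
    (hF : ContinuousOn F (Set.Icc lam lamO))
    (hFpos : ∀ lam' ∈ Set.Icc lam lamO, 0 ≤ F lam')
    (hvertex : dA lamO = 0)
    (hslope : dA' lamO = -EO)
    (hmono : ∀ lam' ∈ Set.Icc lam lamO, dA lam' ≤ dA lam) :
    dA lam ≥ EO * (lamO - lam)
      - dA lam * (lamO - lam) * ∫ lam' in lam..lamO, F lam' := by
  have hdAc : ContinuousOn dA (Icc lam lamO) := fun x hx =>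
    (hdA x hx).continuousAt.continuousWithinAt
  have hdA_nonneg : 0 ≤ dA lam := hvertex ▸ hmono lamO (right_mem_Icc.2 hle)
  have hslope_le : ∀ x ∈ Icc lam lamO,
      dA' x ≤ -EO + dA lam * ∫ t in lam..lamO, F t := by
    intro x hx
    have hsub : Icc x lamO ⊆ Icc lam lamO := Icc_subset_Icc_left hx.1
    calc dA' x = -EO + ∫ t in x..lamO, F t * dA t := by
          rw [eq_add_integral_of_hasDerivAt_neg_mul hx.2 (fun t ht => hfocus t (hsub ht))
            (hF.mono hsub) (hdAc.mono hsub), hslope]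
      _ ≤ -EO + dA lam * ∫ t in x..lamO, F t := by
          gcongr
          exact integral_mul_le_mul_integral_of_le hx.2 (hF.mono hsub) (hdAc.mono hsub)
            (fun t ht => hFpos t (hsub ht)) (fun t ht => hmono t (hsub ht))
      _ ≤ -EO + dA lam * ∫ t in lam..lamO, F t := by
          gcongr
          exact integral_le_integral_of_nonneg_of_le_left hx.1 hx.2 hF hFpos
  have hmvt := sub_le_mul_sub_of_hasDerivAt_le hle hdA hslope_le
  rw [hvertex] at hmvt
  linarith

/-- Eqs. (19)–(21) of the paper: lower bound on the angular diameter distance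
in terms of the accumulated focusing,
`d_A(λ) ≥ E_O(λ_O − λ) − d_A(λ)(λ_O − λ)∫_λ^{λ_O} F dλ'`
(in the paper's notation, `d_A ≥ E_O(λ_O−λ)(1 − E_O(λ_O−λ)𝓛⁻¹)`). -/
theorem dA_lower_bound_focusing
    (lam lamO : ℝ) (hle : lam ≤ lamO)
    (EO : ℝ) (hEO : 0 < EO)
    (dA dA' F : ℝ → ℝ)
    (hdA : ∀ lam' ∈ Set.Icc lam lamO, HasDerivAt dA (dA' lam') lam')
    (hfocus : ∀ lam' ∈ Set.Icc lam lamO,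
      HasDerivAt dA' (-(F lam') * dA lam') lam')
    (hF : ContinuousOn F (Set.Icc lam lamO))
    (hFpos : ∀ lam' ∈ Set.Icc lam lamO, 0 ≤ F lam')
    (hdAc : ContinuousOn dA (Set.Icc lam lamO))
    (hvertex : dA lamO = 0)
    (hslope : dA' lamO = -EO)
    (hmono : ∀ lam' ∈ Set.Icc lam lamO, dA lam' ≤ dA lam) :
    dA lam ≥ EO * (lamO - lam)
      - dA lam * (lamO - lam) * ∫ lam' in lam..lamO, F lam' :=
  dA_lower_bound_focusing_general lam lamO hle EO dA dA' F hdA hfocus hF hFpos hvertex hslope hmono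
end

section
/- (Eq. (22) of the paper.) Let λ < λ_O be reals and E_O > 0. Let z, 𝕳, 𝕼, d_A, F : ℝ → ℝ satisfy on [λ, λ_O]: z differentiable with z' = −E_O(1+z)²𝕳, z(λ_O)=0, 1+z > 0; 𝕳 differentiable with 𝕳' = −E_O(1+z)𝕳²(1+𝕼) and 𝕳_O := 𝕳(λ_O) > 0; 𝕼𝕳² continuous; d_A twice continuously differentiable with d_A'' = −F·d_A, F continuous, F ≥ 0, d_A(λ_O)=0, d_A'(λ_O)=−E_O, and d_A(λ') ≤ d_A(λ) for all λ' ∈ [λ, λ_O]. Suppose moreover D := 1 − d_A(λ)·(∫_λ^{λ_O}F dλ')/E_O > 0 and X := (E_O/((λ_O−λ)𝕳_O))·∫_λ^{λ_O}∫_{λ'}^{λ_O}𝕼𝕳² dλ''dλ' ≥ −1. Then (1/2)·(1 − (1+z(λ))^{−2}) ≤ 𝕳_O · d_A(λ) · (1 + X)/D. -/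
/-!
Expand both `G = (1 - (1+z)⁻²)/2` and `d_A` to first order about the vertex `λ_O`, with the
remainder written as a double integral of the second derivative. Along the ray
`G' = -E_O 𝕳/(1+z)` and `(𝕳/(1+z))' = -E_O 𝕼𝕳²`, so `G(λ) = E_O (λ_O-λ) 𝕳_O (1 + X)` exactly.
For `d_A` the focusing equation makes the remainder `-∫∫ F d_A`, which `d_A ≤ d_A(λ)` and `F ≥ 0`
bound, so that `E_O (λ_O-λ) D ≤ d_A(λ)`. Dividing by `D > 0` and multiplying by
`𝕳_O (1 + X) ≥ 0` gives the bound.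
-/

open intervalIntegral Set

lemma uIcc_subset_Icc_of_mem {a b x : ℝ} (hx : x ∈ Icc a b) : uIcc x b ⊆ Icc a b := by
  rw [uIcc_of_le hx.2]
  exact Icc_subset_Icc hx.1 le_rfl

theorem eq_sub_mul_add_integral_integral_of_hasDerivAt {f f' g : ℝ → ℝ} {a b : ℝ}
    (hab : a ≤ b)
    (hf : ∀ x ∈ Icc a b, HasDerivAt f (f' x) x) (hf' : ∀ x ∈ Icc a b, HasDerivAt f' (g x) x)
    (hg : ContinuousOn g (Icc a b)) :
    f a = f b - f' b * (b - a) + ∫ x in a..b, ∫ t in x..b, g t := by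
  have hf'c : ContinuousOn f' (Icc a b) := fun x hx => (hf' x hx).continuousAt.continuousWithinAt
  have hinner : ∀ x ∈ uIcc a b, ∫ t in x..b, g t = f' b - f' x := by
    intro x hx
    rw [uIcc_of_le hab] at hx
    exact integral_eq_sub_of_hasDerivAt (fun t ht => hf' t (uIcc_subset_Icc_of_mem hx ht))
      ((hg.mono (uIcc_subset_Icc_of_mem hx)).intervalIntegrable)
  have houter : ∫ x in a..b, f' x = f b - f a :=
    integral_eq_sub_of_hasDerivAt (fun x hx => hf x (by rwa [uIcc_of_le hab] at hx))
      (hf'c.intervalIntegrable_of_Icc hab)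
  rw [integral_congr hinner, integral_sub intervalIntegrable_const
    (hf'c.intervalIntegrable_of_Icc hab), houter, integral_const, smul_eq_mul]
  ring

theorem integral_integral_mul_le {F d : ℝ → ℝ} {a b M : ℝ} (hab : a ≤ b)
    (hF : ContinuousOn F (Icc a b)) (hd : ContinuousOn d (Icc a b))
    (hF_nonneg : ∀ x ∈ Icc a b, 0 ≤ F x) (hdM : ∀ x ∈ Icc a b, d x ≤ M) (hM : 0 ≤ M) :
    ∫ x in a..b, ∫ t in x..b, F t * d t ≤ (b - a) * (M * ∫ t in a..b, F t) := by
  have hinner : ∀ x ∈ Icc a b, ∫ t in x..b, F t * d t ≤ M * ∫ t in a..b, F t := by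
    intro x hx
    have hsub := uIcc_subset_Icc_of_mem hx
    calc ∫ t in x..b, F t * d t ≤ ∫ t in x..b, M * F t := by
          refine integral_mono_on hx.2 ((hF.mono hsub).mul (hd.mono hsub)).intervalIntegrable
            ((hF.mono hsub).const_smul M).intervalIntegrable fun t ht => ?_
          have ht' : t ∈ Icc a b := ⟨hx.1.trans ht.1, ht.2⟩
          rw [mul_comm M]
          exact mul_le_mul_of_nonneg_left (hdM t ht') (hF_nonneg t ht')
      _ = M * ∫ t in x..b, F t := integral_const_mul M F
      _ ≤ M * ∫ t in a..b, F t := by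
          refine mul_le_mul_of_nonneg_left (integral_mono_interval hx.1 hx.2 le_rfl ?_
            (hF.intervalIntegrable_of_Icc hab)) hM
          filter_upwards [MeasureTheory.ae_restrict_mem measurableSet_Ioc] with t ht
          exact hF_nonneg t (Ioc_subset_Icc_self ht)
  have hK : ContinuousOn (fun x => ∫ t in x..b, F t * d t) (Icc a b) := by
    rw [← uIcc_of_le hab]
    exact continuousOn_primitive_interval_left
      ((hF.mul hd).integrableOn_Icc.mono_set (uIcc_of_le hab).subset)
  have := integral_mono_on hab (hK.intervalIntegrable_of_Icc (μ := MeasureTheory.volume) hab)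
    intervalIntegrable_const hinner
  rwa [integral_const, smul_eq_mul] at this

section Redshift

variable {EO : ℝ} {z H Q : ℝ → ℝ} {x : ℝ}

lemma hasDerivAt_half_one_sub_inv_sq
    (hz : HasDerivAt z (-EO * (1 + z x) ^ 2 * H x) x) (hx : 1 + z x ≠ 0) :
    HasDerivAt (fun y => (1 - ((1 + z y) ^ 2)⁻¹) / 2) (-EO * (H x / (1 + z x))) x := by
  refine ((((hz.const_add 1).pow 2).inv (pow_ne_zero 2 hx)).const_sub 1 |>.div_const 2)
    |>.congr_deriv ?_
  simp only [Pi.pow_apply]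
  field_simp
  ring

lemma hasDerivAt_div_one_add
    (hz : HasDerivAt z (-EO * (1 + z x) ^ 2 * H x) x)
    (hH : HasDerivAt H (-EO * (1 + z x) * H x ^ 2 * (1 + Q x)) x) (hx : 1 + z x ≠ 0) :
    HasDerivAt (fun y => H y / (1 + z y)) (-EO * (Q x * H x ^ 2)) x := by
  refine (hH.div (hz.const_add 1) hx).congr_deriv ?_
  field_simp
  ring

theorem half_one_sub_inv_sq_eq_integral {a b : ℝ} (hab : a ≤ b)
    (hz : ∀ x ∈ Icc a b, HasDerivAt z (-EO * (1 + z x) ^ 2 * H x) x) (hzb : z b = 0)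
    (hz_ne : ∀ x ∈ Icc a b, 1 + z x ≠ 0)
    (hH : ∀ x ∈ Icc a b, HasDerivAt H (-EO * (1 + z x) * H x ^ 2 * (1 + Q x)) x)
    (hQH : ContinuousOn (fun x => Q x * H x ^ 2) (Icc a b)) :
    (1 - ((1 + z a) ^ 2)⁻¹) / 2
      = EO * (b - a) * H b + EO ^ 2 * ∫ x in a..b, ∫ t in x..b, Q t * H t ^ 2 := by
  have htaylor := eq_sub_mul_add_integral_integral_of_hasDerivAt hab
    (fun x hx => hasDerivAt_half_one_sub_inv_sq (hz x hx) (hz_ne x hx))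
    (g := fun x => EO ^ 2 * (Q x * H x ^ 2))
    (fun x hx => ((hasDerivAt_div_one_add (hz x hx) (hH x hx) (hz_ne x hx)).const_mul (-EO))
      |>.congr_deriv (by ring))
    (continuousOn_const.mul hQH)
  simp only [integral_const_mul, hzb] at htaylor
  rw [htaylor, add_zero, one_pow, inv_one, sub_self, zero_div]
  ring

end Redshift

theorem mul_sub_mul_integral_le_of_focusing {a b EO : ℝ} {dA dA' F : ℝ → ℝ} (hab : a ≤ b)
    (hdA : ∀ x ∈ Icc a b, HasDerivAt dA (dA' x) x)
    (hfocus : ∀ x ∈ Icc a b, HasDerivAt dA' (-(F x) * dA x) x)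
    (hF : ContinuousOn F (Icc a b)) (hF_nonneg : ∀ x ∈ Icc a b, 0 ≤ F x)
    (hvertex : dA b = 0) (hslope : dA' b = -EO) (hmax : ∀ x ∈ Icc a b, dA x ≤ dA a) :
    EO * (b - a) - (b - a) * (dA a * ∫ t in a..b, F t) ≤ dA a := by
  have hdAc : ContinuousOn dA (Icc a b) := fun x hx => (hdA x hx).continuousAt.continuousWithinAt
  have hdA_nonneg : 0 ≤ dA a := hvertex ▸ hmax b ⟨hab, le_rfl⟩
  have htaylor := eq_sub_mul_add_integral_integral_of_hasDerivAt hab hdA hfocus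
    (hF.neg.mul hdAc)
  simp only [neg_mul, integral_neg, hvertex, hslope] at htaylor
  have hbound := integral_integral_mul_le hab hF hdAc hF_nonneg hmax hdA_nonneg
  linarith

/-- Eq. (22) of the paper: the bound
`(1 − (1+z)⁻²)/2 ≤ 𝕳_O d_A (1 + X)/D` with
`X = (E_O/((λ_O−λ)𝕳_O)) ∫∫ 𝕼𝕳²` and `D = 1 − d_A (∫F)/E_O`. -/
theorem distance_redshift_upper_bound
    (lam lamO : ℝ) (hlt : lam < lamO)
    (EO : ℝ) (hEO : 0 < EO)
    (z H Q dA dA' F : ℝ → ℝ)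
    (hz : ∀ lam' ∈ Set.Icc lam lamO,
      HasDerivAt z (-EO * (1 + z lam') ^ 2 * H lam') lam')
    (hzO : z lamO = 0)
    (hzpos : ∀ lam' ∈ Set.Icc lam lamO, 0 < 1 + z lam')
    (hH : ∀ lam' ∈ Set.Icc lam lamO,
      HasDerivAt H (-EO * (1 + z lam') * (H lam') ^ 2 * (1 + Q lam')) lam')
    (hHO : 0 < H lamO)
    (hQH : ContinuousOn (fun lam' => Q lam' * (H lam') ^ 2) (Set.Icc lam lamO))
    (hdA : ∀ lam' ∈ Set.Icc lam lamO, HasDerivAt dA (dA' lam') lam')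
    (hfocus : ∀ lam' ∈ Set.Icc lam lamO,
      HasDerivAt dA' (-(F lam') * dA lam') lam')
    (hF : ContinuousOn F (Set.Icc lam lamO))
    (hFpos : ∀ lam' ∈ Set.Icc lam lamO, 0 ≤ F lam')
    (hvertex : dA lamO = 0)
    (hslope : dA' lamO = -EO)
    (hmono : ∀ lam' ∈ Set.Icc lam lamO, dA lam' ≤ dA lam)
    (hD : 0 < 1 - dA lam * (∫ lam' in lam..lamO, F lam') / EO)
    (hX : -1 ≤ (EO / ((lamO - lam) * H lamO))
      * ∫ lam' in lam..lamO, ∫ lam'' in lam'..lamO, Q lam'' * (H lam'') ^ 2) :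
    (1 - ((1 + z lam) ^ 2)⁻¹) / 2
      ≤ H lamO * dA lam
          * (1 + (EO / ((lamO - lam) * H lamO))
              * ∫ lam' in lam..lamO, ∫ lam'' in lam'..lamO,
                  Q lam'' * (H lam'') ^ 2)
          / (1 - dA lam * (∫ lam' in lam..lamO, F lam') / EO) := by
  have hL : 0 < lamO - lam := sub_pos.mpr hlt
  have hredshift :=
    half_one_sub_inv_sq_eq_integral hlt.le hz hzO (fun x hx => (hzpos x hx).ne') hH hQH
  have hdistance :=
    mul_sub_mul_integral_le_of_focusing hlt.le hdA hfocus hF hFpos hvertex hslope hmono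
  set X := (EO / ((lamO - lam) * H lamO)) * ∫ x in lam..lamO, ∫ t in x..lamO, Q t * H t ^ 2
    with hXdef
  set D := 1 - dA lam * (∫ t in lam..lamO, F t) / EO with hDdef
  have hED : EO * (lamO - lam) * D ≤ dA lam := by
    rw [hDdef]
    field_simp
    linarith
  calc (1 - ((1 + z lam) ^ 2)⁻¹) / 2 = H lamO * (1 + X) * (EO * (lamO - lam)) := by
        rw [hredshift, hXdef]
        field_simp
    _ ≤ H lamO * (1 + X) * (dA lam / D) :=
        mul_le_mul_of_nonneg_left ((le_div_iff₀ hD).mpr hED) (mul_nonneg hHO.le (by linarith))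
    _ = H lamO * dA lam * (1 + X) / D := by ring
end

section
/- (Saturation of the Milne bound.) Let λ ≤ λ_O be reals and E_O > 0. Let z, 𝕳, d_A : ℝ → ℝ satisfy on [λ, λ_O]: z differentiable with z' = −E_O(1+z)²𝕳, z(λ_O)=0, 1+z > 0; 𝕳 differentiable with 𝕳' = −E_O(1+z)𝕳² (i.e., 𝕼 ≡ 0) and 𝕳_O := 𝕳(λ_O) > 0; d_A twice differentiable with d_A'' = 0, d_A(λ_O)=0, d_A'(λ_O)=−E_O. Then d_A(λ) = E_O(λ_O − λ) and 𝕳_O · d_A(λ) = (1/2)·(1 − (1+z(λ))^{−2}); that is, in the Milne case the distance–redshift relation attains exactly the bound of Theorems 1 and 2. -/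
/-!
With `𝕼 ≡ 0` the equations for `z` and `𝕳` make `𝕳 / (1 + z)` a first integral, so
`𝕳 = 𝕳_O (1 + z)`. Then `((1 + z)²)⁻¹` has the constant derivative `2 E_O 𝕳_O`, while without
focusing `d_A` is affine with slope `-E_O`; comparing the two linear functions of `λ` gives the
Milne relation.
-/

open Set

section ConstantDerivative

variable {E : Type*} [NormedAddCommGroup E] [NormedSpace ℝ E] {f : ℝ → E} {a b x y : ℝ}

lemma eq_of_hasDerivAt_zero_Icc (hf : ∀ t ∈ Icc a b, HasDerivAt f 0 t)
    (hx : x ∈ Icc a b) (hy : y ∈ Icc a b) : f x = f y := by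
  have hconst := constant_of_has_deriv_right_zero
    (fun t ht => (hf t ht).continuousAt.continuousWithinAt)
    (fun t ht => (hf t (Ico_subset_Icc_self ht)).hasDerivWithinAt)
  rw [hconst x hx, hconst y hy]

lemma sub_eq_smul_of_hasDerivAt_const {c : E} (hf : ∀ t ∈ Icc a b, HasDerivAt f c t)
    (hx : x ∈ Icc a b) (hy : y ∈ Icc a b) : f y - f x = (y - x) • c := by
  have hderiv : ∀ t ∈ Icc a b, HasDerivAt (fun s => f s - s • c) 0 t := fun t ht => by
    simpa using (hf t ht).fun_sub ((hasDerivAt_id t).smul_const c)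
  have hconst := eq_of_hasDerivAt_zero_Icc hderiv hx hy
  rw [sub_smul]
  linear_combination (norm := module) -hconst

end ConstantDerivative

section Redshift

variable {a b EO : ℝ} {z H : ℝ → ℝ}

lemma hasDerivAt_inv_sq_one_add_redshift {x : ℝ}
    (hz : HasDerivAt z (-EO * (1 + z x) ^ 2 * H x) x) (hz0 : 1 + z x ≠ 0) :
    HasDerivAt (fun t => ((1 + z t) ^ 2)⁻¹) (2 * EO * (H x / (1 + z x))) x := by
  refine (((hz.const_add 1).fun_pow 2).fun_inv (pow_ne_zero 2 hz0)).congr_deriv ?_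
  field_simp
  ring

lemma hubble_div_one_add_redshift_eq_s12
    (hz : ∀ x ∈ Icc a b, HasDerivAt z (-EO * (1 + z x) ^ 2 * H x) x)
    (hz0 : ∀ x ∈ Icc a b, 1 + z x ≠ 0)
    (hH : ∀ x ∈ Icc a b, HasDerivAt H (-EO * (1 + z x) * H x ^ 2) x)
    {x y : ℝ} (hx : x ∈ Icc a b) (hy : y ∈ Icc a b) :
    H x / (1 + z x) = H y / (1 + z y) := by
  refine eq_of_hasDerivAt_zero_Icc (f := fun t => H t / (1 + z t)) (fun t ht => ?_) hx hy
  refine ((hH t ht).fun_div ((hz t ht).const_add 1) (hz0 t ht)).congr_deriv ?_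
  exact div_eq_zero_iff.mpr (.inl (by ring))

lemma one_sub_inv_sq_one_add_redshift
    (hz : ∀ x ∈ Icc a b, HasDerivAt z (-EO * (1 + z x) ^ 2 * H x) x)
    (hz0 : ∀ x ∈ Icc a b, 1 + z x ≠ 0)
    (hH : ∀ x ∈ Icc a b, HasDerivAt H (-EO * (1 + z x) * H x ^ 2) x)
    (hzb : z b = 0) (hab : a ≤ b) :
    1 - ((1 + z a) ^ 2)⁻¹ = 2 * EO * H b * (b - a) := by
  have hb : b ∈ Icc a b := right_mem_Icc.mpr hab
  have hderiv : ∀ x ∈ Icc a b,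
      HasDerivAt (fun t => ((1 + z t) ^ 2)⁻¹) (2 * EO * H b) x := fun x hx => by
    have hratio := hubble_div_one_add_redshift_eq_s12 hz hz0 hH hx hb
    rw [hzb, add_zero, div_one] at hratio
    simpa [hratio] using hasDerivAt_inv_sq_one_add_redshift (hz x hx) (hz0 x hx)
  have hincr := sub_eq_smul_of_hasDerivAt_const hderiv (left_mem_Icc.mpr hab) hb
  rw [hzb, smul_eq_mul] at hincr
  linear_combination hincr

end Redshift

theorem milne_bound_saturation_general
    (lam lamO : ℝ) (hle : lam ≤ lamO)
    (EO : ℝ)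
    (z H dA dA' : ℝ → ℝ)
    (hz : ∀ lam' ∈ Set.Icc lam lamO,
      HasDerivAt z (-EO * (1 + z lam') ^ 2 * H lam') lam')
    (hzO : z lamO = 0)
    (hzpos : ∀ lam' ∈ Set.Icc lam lamO, 0 < 1 + z lam')
    (hH : ∀ lam' ∈ Set.Icc lam lamO,
      HasDerivAt H (-EO * (1 + z lam') * (H lam') ^ 2) lam')
    (hdA : ∀ lam' ∈ Set.Icc lam lamO, HasDerivAt dA (dA' lam') lam')
    (hfocus : ∀ lam' ∈ Set.Icc lam lamO, HasDerivAt dA' 0 lam')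
    (hvertex : dA lamO = 0)
    (hslope : dA' lamO = -EO) :
    dA lam = EO * (lamO - lam)
      ∧ H lamO * dA lam = (1 - ((1 + z lam) ^ 2)⁻¹) / 2 := by
  have hlam : lam ∈ Icc lam lamO := left_mem_Icc.mpr hle
  have hlamO : lamO ∈ Icc lam lamO := right_mem_Icc.mpr hle
  have hslope_const : ∀ x ∈ Icc lam lamO, HasDerivAt dA (-EO) x := fun x hx => by
    rw [← hslope, eq_of_hasDerivAt_zero_Icc hfocus hlamO hx]
    exact hdA x hx
  have hdist : dA lam = EO * (lamO - lam) := by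
    have hincr := sub_eq_smul_of_hasDerivAt_const hslope_const hlam hlamO
    rw [hvertex, smul_eq_mul] at hincr
    linear_combination -hincr
  have hredshift := one_sub_inv_sq_one_add_redshift hz (fun x hx => (hzpos x hx).ne') hH hzO hle
  exact ⟨hdist, by rw [hredshift, hdist]; ring⟩

/-- Saturation of the Milne bound: with vanishing effective deceleration
(`𝕼 ≡ 0`, i.e. `𝕳' = −E_O(1+z)𝕳²`) and no focusing (`d_A'' = 0`), the
distance–redshift relation attains exactly the Milne bound:
`d_A(λ) = E_O(λ_O − λ)` and `𝕳_O d_A(λ) = (1 − (1+z(λ))⁻²)/2`. -/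
theorem milne_bound_saturation
    (lam lamO : ℝ) (hle : lam ≤ lamO)
    (EO : ℝ) (hEO : 0 < EO)
    (z H dA dA' : ℝ → ℝ)
    (hz : ∀ lam' ∈ Set.Icc lam lamO,
      HasDerivAt z (-EO * (1 + z lam') ^ 2 * H lam') lam')
    (hzO : z lamO = 0)
    (hzpos : ∀ lam' ∈ Set.Icc lam lamO, 0 < 1 + z lam')
    (hH : ∀ lam' ∈ Set.Icc lam lamO,
      HasDerivAt H (-EO * (1 + z lam') * (H lam') ^ 2) lam')
    (hHO : 0 < H lamO)
    (hdA : ∀ lam' ∈ Set.Icc lam lamO, HasDerivAt dA (dA' lam') lam')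
    (hfocus : ∀ lam' ∈ Set.Icc lam lamO, HasDerivAt dA' 0 lam')
    (hvertex : dA lamO = 0)
    (hslope : dA' lamO = -EO) :
    dA lam = EO * (lamO - lam)
      ∧ H lamO * dA lam = (1 - ((1 + z lam) ^ 2)⁻¹) / 2 :=
  milne_bound_saturation_general lam lamO hle EO z H dA dA' hz hzO hzpos hH hdA hfocus hvertex
    hslope
end
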